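/- The commutator subgroup of G_{m,n} = ⟨ρ,σ,τ | ρ^4 = σ^{2^{n+1}} = τ^{2^{m+1}} = 1, ρ² = σ^{2^n}, [ρ,σ] = σ², [ρ,τ] = τ², [σ,τ] = 1⟩ is the subgroup generated by σ² and τ², and this subgroup is abelian; consequently G_{m,n} is metabelian. -/

import Mathlib

/-- Relators of the presented group `G_{m,n}`, with commutator convention
`[x,y] = x⁻¹y⁻¹xy`. -/
def GmnRels (m n : ℕ) : Set (FreeGroup (Fin 3)) :=
  {FreeGroup.of 0 ^ 4,
   FreeGroup.of 1 ^ (2 ^ (n + 1)),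
   FreeGroup.of 2 ^ (2 ^ (m + 1)),
   FreeGroup.of 0 ^ 2 * (FreeGroup.of 1 ^ (2 ^ n))⁻¹,
   (FreeGroup.of 0)⁻¹ * (FreeGroup.of 1)⁻¹ * FreeGroup.of 0 * FreeGroup.of 1 *
     (FreeGroup.of 1 ^ 2)⁻¹,
   (FreeGroup.of 0)⁻¹ * (FreeGroup.of 2)⁻¹ * FreeGroup.of 0 * FreeGroup.of 2 *
     (FreeGroup.of 2 ^ 2)⁻¹,
   (FreeGroup.of 1)⁻¹ * (FreeGroup.of 2)⁻¹ * FreeGroup.of 1 * FreeGroup.of 2}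

/-- The group `G_{m,n} = ⟨ρ,σ,τ ∣ ρ⁴ = σ^{2^{n+1}} = τ^{2^{m+1}} = 1, ρ² = σ^{2^n},
[ρ,σ] = σ², [ρ,τ] = τ², [σ,τ] = 1⟩`. -/
def Gmn (m n : ℕ) := PresentedGroup (GmnRels m n)

instance (m n : ℕ) : Group (Gmn m n) := inferInstanceAs (Group (PresentedGroup _))

def Gρ (m n : ℕ) : Gmn m n := PresentedGroup.of 0
def Gσ (m n : ℕ) : Gmn m n := PresentedGroup.of 1
def Gτ (m n : ℕ) : Gmn m n := PresentedGroup.of 2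

/-!
Conjugation by `ρ` inverts `σ` and `τ` (this is the relation `[ρ,σ] = σ²`, resp. `[ρ,τ] = τ²`),
and `σ`, `τ` commute. Hence `⟨σ², τ²⟩` is abelian and normalised by all three generators; it
contains the commutators `[ρ,σ] = σ²` and `[ρ,τ] = τ²`, and modulo it the generators commute, so it
is the whole commutator subgroup.
-/

open scoped commutatorElement
open Subgroup (closure normalizer centralizer)

section GroupLemmas

variable {G : Type*} [Group G]

theorem mul_mul_inv_eq_inv_of_commutatorElement_inv_inv {a b : G} (h : ⁅a⁻¹, b⁻¹⁆ = b ^ 2) :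
    a * b * a⁻¹ = b⁻¹ := by
  have hb : a⁻¹ * b⁻¹ * a = b :=
    calc a⁻¹ * b⁻¹ * a = ⁅a⁻¹, b⁻¹⁆ * b⁻¹ := by rw [commutatorElement_def]; group
      _ = b := by rw [h]; group
  calc a * b * a⁻¹ = a * (a⁻¹ * b⁻¹ * a) * a⁻¹ := by rw [hb]
    _ = b⁻¹ := by group

theorem mem_normalizer_closure_of_conj_image_eq_inv {s : Set G} {g : G}
    (h : MulAut.conj g '' s = s⁻¹) : g ∈ normalizer (closure s : Set G) := by
  rw [Subgroup.mem_normalizer_iff_map_conj_eq, MonoidHom.map_closure, MonoidHom.coe_coe, h,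
    Subgroup.closure_inv]

theorem commutator_le_of_closure_eq_top {T : Set G} (hT : closure T = ⊤)
    {N : Subgroup G} [N.Normal] (hTN : T.Pairwise fun a b => ⁅a, b⁆ ∈ N) :
    commutator G ≤ N := by
  set φ := QuotientGroup.mk' N
  have hgen : closure (φ '' T) = ⊤ := by
    rw [← MonoidHom.map_closure, hT, ← MonoidHom.range_eq_map, MonoidHom.range_eq_top]
    exact QuotientGroup.mk'_surjective N
  have hcomm : φ '' T ⊆ centralizer (φ '' T) := by
    rintro _ ⟨a, ha, rfl⟩ _ ⟨b, hb, rfl⟩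
    rcases eq_or_ne b a with rfl | hba
    · rfl
    rw [← commutatorElement_eq_one_iff_mul_comm, ← map_commutatorElement, QuotientGroup.mk'_apply,
      QuotientGroup.eq_one_iff]
    exact hTN hb ha hba
  have : IsMulCommutative (G ⧸ N) := by
    rw [← Subgroup.center_eq_top_iff, eq_top_iff, ← Subgroup.centralizer_univ, ← Subgroup.coe_top,
      ← hgen, Subgroup.centralizer_closure]
    exact (Subgroup.closure_le _).mpr hcomm
  rw [commutator_eq_closure, Subgroup.closure_le]
  rintro _ ⟨a, b, rfl⟩
  rw [SetLike.mem_coe, ← QuotientGroup.eq_one_iff, ← QuotientGroup.mk'_apply, map_commutatorElement,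
    commutatorElement_eq_one_iff_mul_comm]
  exact mul_comm' _ _

end GroupLemmas

namespace Gmn

variable (m n : ℕ)

-- Mathlib's `⁅a, b⁆` is `a * b * a⁻¹ * b⁻¹`, so the paper's `[ρ,σ]` is `⁅ρ⁻¹, σ⁻¹⁆`.
theorem commutatorElement_inv_rho_inv_sigma : ⁅(Gρ m n)⁻¹, (Gσ m n)⁻¹⁆ = Gσ m n ^ 2 := by
  have h := PresentedGroup.one_of_mem (rels := GmnRels m n)
    (x := (FreeGroup.of 0)⁻¹ * (FreeGroup.of 1)⁻¹ * FreeGroup.of 0 * FreeGroup.of 1 *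
      (FreeGroup.of 1 ^ 2)⁻¹) (by simp [GmnRels])
  simp only [map_mul, map_inv, map_pow] at h
  rw [commutatorElement_def, inv_inv, inv_inv, ← mul_inv_eq_one]
  exact h

theorem commutatorElement_inv_rho_inv_tau : ⁅(Gρ m n)⁻¹, (Gτ m n)⁻¹⁆ = Gτ m n ^ 2 := by
  have h := PresentedGroup.one_of_mem (rels := GmnRels m n)
    (x := (FreeGroup.of 0)⁻¹ * (FreeGroup.of 2)⁻¹ * FreeGroup.of 0 * FreeGroup.of 2 *
      (FreeGroup.of 2 ^ 2)⁻¹) (by simp [GmnRels])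
  simp only [map_mul, map_inv, map_pow] at h
  rw [commutatorElement_def, inv_inv, inv_inv, ← mul_inv_eq_one]
  exact h

theorem commute_sigma_tau : Commute (Gσ m n) (Gτ m n) := by
  have h := PresentedGroup.one_of_mem (rels := GmnRels m n)
    (x := (FreeGroup.of 1)⁻¹ * (FreeGroup.of 2)⁻¹ * FreeGroup.of 1 * FreeGroup.of 2)
    (by simp [GmnRels])
  simp only [map_mul, map_inv] at h
  rw [← Commute.inv_inv_iff, ← commutatorElement_eq_one_iff_commute, commutatorElement_def,
    inv_inv, inv_inv]
  exact h

theorem rho_mul_sigma_mul_inv_rho : Gρ m n * Gσ m n * (Gρ m n)⁻¹ = (Gσ m n)⁻¹ :=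
  mul_mul_inv_eq_inv_of_commutatorElement_inv_inv (commutatorElement_inv_rho_inv_sigma m n)

theorem rho_mul_tau_mul_inv_rho : Gρ m n * Gτ m n * (Gρ m n)⁻¹ = (Gτ m n)⁻¹ :=
  mul_mul_inv_eq_inv_of_commutatorElement_inv_inv (commutatorElement_inv_rho_inv_tau m n)

theorem closure_rho_sigma_tau : closure {Gρ m n, Gσ m n, Gτ m n} = ⊤ := by
  refine top_le_iff.mp ((PresentedGroup.closure_range_of (GmnRels m n)).ge.trans
    (Subgroup.closure_mono ?_))
  rintro _ ⟨i, rfl⟩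
  fin_cases i
  exacts [.inl rfl, .inr (.inl rfl), .inr (.inr rfl)]

instance normal_closure_sq : (closure {Gσ m n ^ 2, Gτ m n ^ 2}).Normal := by
  have hσ : Gσ m n ∈ centralizer {Gσ m n ^ 2, Gτ m n ^ 2} := by
    rw [Subgroup.mem_centralizer_iff]
    rintro _ (rfl | rfl)
    exacts [(Commute.self_pow _ 2).eq.symm, ((commute_sigma_tau m n).symm.pow_left 2).eq]
  have hτ : Gτ m n ∈ centralizer {Gσ m n ^ 2, Gτ m n ^ 2} := by
    rw [Subgroup.mem_centralizer_iff]
    rintro _ (rfl | rfl)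
    exacts [((commute_sigma_tau m n).pow_left 2).eq, (Commute.self_pow _ 2).eq.symm]
  have hρ : MulAut.conj (Gρ m n) '' {Gσ m n ^ 2, Gτ m n ^ 2} = {Gσ m n ^ 2, Gτ m n ^ 2}⁻¹ := by
    rw [Set.image_pair, Set.inv_insert, Set.inv_singleton, MulAut.conj_apply, MulAut.conj_apply,
      ← conj_pow, ← conj_pow, rho_mul_sigma_mul_inv_rho, rho_mul_tau_mul_inv_rho, inv_pow, inv_pow]
  rw [← Subgroup.normalizer_eq_top_iff, ← top_le_iff, ← closure_rho_sigma_tau, Subgroup.closure_le]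
  rintro _ (rfl | rfl | rfl)
  · exact mem_normalizer_closure_of_conj_image_eq_inv hρ
  · exact Subgroup.normalizer_le_normalizer_closure _ (Subgroup.centralizer_le_normalizer _ hσ)
  · exact Subgroup.normalizer_le_normalizer_closure _ (Subgroup.centralizer_le_normalizer _ hτ)

theorem commutator_eq_closure_sq :
    commutator (Gmn m n) = closure {Gσ m n ^ 2, Gτ m n ^ 2} := by
  set K := closure {Gσ m n ^ 2, Gτ m n ^ 2}
  refine le_antisymm (commutator_le_of_closure_eq_top (closure_rho_sigma_tau m n) ?_) ?_
  · have hσ : ⁅Gρ m n, Gσ m n⁆ ∈ K := by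
      rw [commutatorElement_def, rho_mul_sigma_mul_inv_rho, ← mul_inv_rev, ← sq]
      exact inv_mem (Subgroup.subset_closure (.inl rfl))
    have hτ : ⁅Gρ m n, Gτ m n⁆ ∈ K := by
      rw [commutatorElement_def, rho_mul_tau_mul_inv_rho, ← mul_inv_rev, ← sq]
      exact inv_mem (Subgroup.subset_closure (.inr rfl))
    have hστ : ⁅Gσ m n, Gτ m n⁆ ∈ K := (commute_sigma_tau m n).commutator_eq ▸ one_mem K
    have hswap {a b : Gmn m n} (h : ⁅a, b⁆ ∈ K) : ⁅b, a⁆ ∈ K :=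
      commutatorElement_inv a b ▸ inv_mem h
    rintro a (rfl | rfl | rfl) b (rfl | rfl | rfl) hab
    all_goals first | exact (hab rfl).elim | assumption | exact hswap ‹_›
  · rw [Subgroup.closure_le, commutator_eq_closure]
    rintro _ (rfl | rfl)
    exacts [Subgroup.subset_closure ⟨_, _, commutatorElement_inv_rho_inv_sigma m n⟩,
      Subgroup.subset_closure ⟨_, _, commutatorElement_inv_rho_inv_tau m n⟩]

instance isMulCommutative_closure_sq : IsMulCommutative (closure {Gσ m n ^ 2, Gτ m n ^ 2}) := by
  have h := (commute_sigma_tau m n).pow_pow 2 2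
  refine Subgroup.isMulCommutative_closure ?_
  rintro _ (rfl | rfl) _ (rfl | rfl)
  exacts [rfl, h.eq, h.eq.symm, rfl]

end Gmn

theorem stmt4_general (m n : ℕ) :
    commutator (Gmn m n) = Subgroup.closure {Gσ m n ^ 2, Gτ m n ^ 2} ∧
    (∀ x y, x ∈ Subgroup.closure {Gσ m n ^ 2, Gτ m n ^ 2} →
      y ∈ Subgroup.closure {Gσ m n ^ 2, Gτ m n ^ 2} → x * y = y * x) ∧
    ⁅commutator (Gmn m n), commutator (Gmn m n)⁆ = ⊥ := by
  refine ⟨Gmn.commutator_eq_closure_sq m n, fun x y hx hy => setLike_mul_comm hx hy, ?_⟩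
  rw [Gmn.commutator_eq_closure_sq, Subgroup.commutator_self_eq_bot_iff]
  infer_instance

/-- The commutator subgroup of `G_{m,n}` is generated by σ² and τ², this subgroup is abelian,
and consequently `G_{m,n}` is metabelian. -/
theorem stmt4 (m n : ℕ) (hm : 1 ≤ m) (hn : 1 ≤ n) :
    commutator (Gmn m n) = Subgroup.closure {Gσ m n ^ 2, Gτ m n ^ 2} ∧
    (∀ x y, x ∈ Subgroup.closure {Gσ m n ^ 2, Gτ m n ^ 2} →
      y ∈ Subgroup.closure {Gσ m n ^ 2, Gτ m n ^ 2} → x * y = y * x) ∧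
    ⁅commutator (Gmn m n), commutator (Gmn m n)⁆ = ⊥ :=
  stmt4_general m n
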